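/- Let α ∈ (ℝ_{≥0}^n)↓, d ≤ n, and let γ^op be the water-filling of α in dimension d. Then for every sequence ℱ = {f_i}_{i=1}^n in ℂ^d with ‖f_i‖² = α_i for all i, and every convex function φ : [0,∞) → [0,∞), one has ∑_{i=1}^d φ(λ_i) ≥ ∑_{i=1}^d φ(γ^op_i), where (λ_i) = λ(S_ℱ) are the eigenvalues of the frame operator of ℱ. Moreover equality for some strictly convex φ forces λ(S_ℱ) = γ^op. -/

import Mathlib

noncomputable def decr {n : ℕ} (x : Fin n → ℝ) : Fin n → ℝ :=
  fun i => x (Tuple.sort x i.rev)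

noncomputable def psum {n : ℕ} (x : Fin n → ℝ) (k : ℕ) : ℝ :=
  ∑ i ∈ Finset.univ.filter (fun i : Fin n => (i : ℕ) < k), x i

/-- `x` is submajorized by `y` : partial sums of the non-increasing
rearrangement of `x` are dominated by those of `y`. -/
def SubMaj {n d : ℕ} (x : Fin n → ℝ) (y : Fin d → ℝ) : Prop :=
  ∀ k : ℕ, psum (decr x) k ≤ psum (decr y) k

/-- majorization (allowing different lengths). -/
def Maj {n d : ℕ} (x : Fin n → ℝ) (y : Fin d → ℝ) : Prop :=
  SubMaj x y ∧ (∑ i, x i) = (∑ i, y i)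

/-- `γ` is the water-filling of `α` in dimension `d`, with water-level `c`. -/
def IsWaterFilling {n : ℕ} (d : ℕ) (hd0 : 0 < d) (hd : d ≤ n)
    (α : Fin n → ℝ) (c : ℝ) (γ : Fin d → ℝ) : Prop :=
  α ⟨d - 1, by omega⟩ ≤ c ∧
  (∑ i : Fin d, max (α (Fin.castLE hd i)) c) = (∑ i, α i) ∧
  ∀ i : Fin d, γ i = max (α (Fin.castLE hd i)) c

/-- squared norm of a vector in ℂ^k -/
noncomputable def sqNorm {k : ℕ} (v : Fin k → ℂ) : ℝ := ∑ a, Complex.normSq (v a)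

/-- frame operator S = ∑ fᵢ ⊗ fᵢ as a matrix -/
noncomputable def frameOp {k n : ℕ} (f : Fin n → Fin k → ℂ) : Matrix (Fin k) (Fin k) ℂ :=
  ∑ i, Matrix.of fun a b => f i a * (starRingEnd ℂ) (f i b)

theorem frameOp_isHermitian {k n : ℕ} (f : Fin n → Fin k → ℂ) :
    (frameOp f).IsHermitian := by
  unfold frameOp Matrix.IsHermitian
  ext a b
  simp [Matrix.conjTranspose_apply, Matrix.sum_apply, mul_comm]

/-- the eigenvalues of the frame operator, in non-increasing order -/
noncomputable def spec {k n : ℕ} (f : Fin n → Fin k → ℂ) : Fin k → ℝ :=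
  decr ((frameOp_isHermitian f).eigenvalues)

/-!
The eigenvalue sequence `λ = spec f` majorizes `α`: by Ky Fan's maximum principle the sum of the
`k` largest eigenvalues of `S_ℱ` dominates the trace of its compression to any subspace of
dimension at most `k`, in particular to the span of `f₁, …, f_k`, and that compression has trace
at least `α₁ + ⋯ + α_k`; the full traces agree. Having only `d` entries, `λ` then also majorizes
the water-filling `γ = max (α, c)`: on a prefix where `λ` stays above the level `c`, `γ` is `α`
up to the point where `α` drops below `c` and `c` afterwards; otherwise the tail of `λ` lies below
`c ≤ γ`, and the totals agree. Karamata's inequality (Abel summation against the antitone chord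
slopes of `φ`) gives `∑ φ γ ≤ ∑ φ λ`. For strictly convex `φ`, the midpoint `(γ + λ) / 2` is
majorized by `λ` and majorizes `γ`, and strict convexity puts `∑ φ` of it strictly below the
average of the two sums unless `γ = λ`.
-/

open Finset
open scoped InnerProductSpace

section PartialSums

variable {n : ℕ}

lemma psum_succ (x : Fin n → ℝ) {k : ℕ} (hk : k < n) :
    psum x (k + 1) = psum x k + x ⟨k, hk⟩ := by
  rw [psum, psum, add_comm (∑ i ∈ _, x i), ← sum_insert (by simp)]
  congr 1
  ext i
  simp only [mem_filter, mem_univ, true_and, mem_insert, Fin.ext_iff]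
  omega

lemma psum_of_le (x : Fin n → ℝ) {k : ℕ} (hk : n ≤ k) : psum x k = ∑ i, x i := by
  rw [psum, filter_true_of_mem fun i _ => lt_of_lt_of_le i.2 hk]

lemma psum_add_sum_filter_le (x : Fin n → ℝ) (k : ℕ) :
    psum x k + ∑ i ∈ univ.filter (fun i : Fin n => k ≤ (i : ℕ)), x i = ∑ i, x i := by
  rw [psum]
  simpa only [not_lt] using sum_filter_add_sum_filter_not univ (fun i : Fin n => (i : ℕ) < k) x

lemma psum_congr {x y : Fin n → ℝ} {k : ℕ} (h : ∀ i : Fin n, (i : ℕ) < k → x i = y i) :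
    psum x k = psum y k :=
  sum_congr rfl fun i hi => h i (mem_filter.1 hi).2

lemma psum_comp_castLE {m : ℕ} (h : m ≤ n) (x : Fin n → ℝ) (k : ℕ) :
    psum (fun i => x (Fin.castLE h i)) k = psum x (min k m) := by
  refine sum_bij (fun i _ => Fin.castLE h i) ?_ (fun i _ j _ hij => Fin.castLE_injective h hij) ?_
    fun _ _ => rfl
  · intro i hi
    simp only [mem_filter, mem_univ, true_and, Fin.val_castLE] at hi ⊢
    omega
  · intro j hj
    simp only [mem_filter, mem_univ, true_and] at hj
    exact ⟨⟨j, by omega⟩, by simp only [mem_filter, mem_univ, true_and]; omega, rfl⟩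

lemma antitone_decr (x : Fin n → ℝ) : Antitone (decr x) :=
  fun _ _ hij => Tuple.monotone_sort x (Fin.rev_le_rev.2 hij)

lemma decr_eq_comp (x : Fin n → ℝ) :
    decr x = x ∘ (Fin.revPerm.trans (Tuple.sort x) : Equiv.Perm (Fin n)) :=
  rfl

lemma sum_decr (x : Fin n → ℝ) : ∑ i, decr x i = ∑ i, x i := by
  rw [decr_eq_comp]
  exact Equiv.sum_comp _ x

end PartialSums

lemma sum_mul_nonneg_of_psum_nonneg {d : ℕ} {c Δ : Fin d → ℝ} (hc : Antitone c)
    (hc0 : ∀ i, 0 ≤ c i) (hΔ : ∀ k, 0 ≤ psum Δ k) : 0 ≤ ∑ i, c i * Δ i := by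
  induction d with
  | zero => simp
  | succ d ih =>
    set c₀ := c (Fin.last d)
    have hprefix : 0 ≤ ∑ i : Fin d, (c i.castSucc - c₀) * Δ i.castSucc :=
      ih (fun i j hij => sub_le_sub_right (hc (Fin.castSucc_le_castSucc_iff.2 hij)) _)
        (fun i => sub_nonneg.2 (hc (Fin.le_last _))) fun k =>
          (psum_comp_castLE (Nat.le_succ d) Δ k).symm ▸ hΔ _
    have htotal : ∑ i : Fin d, Δ i.castSucc + Δ (Fin.last d) = psum Δ (d + 1) := by
      rw [psum_of_le Δ le_rfl, Fin.sum_univ_castSucc]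
    have hsplit : ∑ i, c i * Δ i
        = ∑ i : Fin d, (c i.castSucc - c₀) * Δ i.castSucc + c₀ * psum Δ (d + 1) := by
      rw [← htotal, Fin.sum_univ_castSucc, mul_add, mul_sum]
      simp only [sub_mul, sum_sub_distrib]
      ring
    rw [hsplit]
    exact add_nonneg hprefix (mul_nonneg (hc0 _) (hΔ _))

lemma sum_mul_nonneg_of_psum_nonneg_of_sum_eq_zero {d : ℕ} {c Δ : Fin d → ℝ} (hc : Antitone c)
    (hΔ : ∀ k, 0 ≤ psum Δ k) (hΔ0 : ∑ i, Δ i = 0) : 0 ≤ ∑ i, c i * Δ i := by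
  obtain ⟨m, hm⟩ := (Set.finite_range c).bddBelow
  have hshift : ∑ i, c i * Δ i = ∑ i, (c i - m) * Δ i := by
    simp only [sub_mul, sum_sub_distrib, ← mul_sum, hΔ0, mul_zero, sub_zero]
  rw [hshift]
  exact sum_mul_nonneg_of_psum_nonneg (fun i j hij => sub_le_sub_right (hc hij) m)
    (fun i => sub_nonneg.2 (hm ⟨i, rfl⟩)) hΔ

lemma ConvexOn.slope_le_slope {s : Set ℝ} {φ : ℝ → ℝ} (hφ : ConvexOn ℝ s φ) {a b a' b' : ℝ}
    (ha : a ∈ s) (hb : b ∈ s) (ha' : a' ∈ s) (hb' : b' ∈ s) (hab : a ≠ b) (hab' : a' ≠ b')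
    (haa' : a ≤ a') (hbb' : b ≤ b') : slope φ a b ≤ slope φ a' b' := by
  by_cases hab'' : a = b'
  · subst hab''
    have hba' : b ≠ a' := fun h => hab (le_antisymm (h ▸ haa') hbb')
    calc slope φ a b = slope φ b a := slope_comm φ a b
      _ ≤ slope φ b a' := hφ.slope_mono hb ⟨ha, hab⟩ ⟨ha', hba'.symm⟩ haa'
      _ = slope φ a' b := slope_comm φ b a'
      _ ≤ slope φ a' a := hφ.slope_mono ha' ⟨hb, hba'⟩ ⟨ha, hab'.symm⟩ hbb'
  · calc slope φ a b ≤ slope φ a b' := hφ.slope_mono ha ⟨hb, Ne.symm hab⟩ ⟨hb', Ne.symm hab''⟩ hbb'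
      _ = slope φ b' a := slope_comm φ a b'
      _ ≤ slope φ b' a' := hφ.slope_mono hb' ⟨ha, hab''⟩ ⟨ha', hab'⟩ haa'
      _ = slope φ a' b' := slope_comm φ b' a'

theorem ConvexOn.sum_le_sum_of_majorized {s : Set ℝ} {φ : ℝ → ℝ} (hφ : ConvexOn ℝ s φ)
    {d : ℕ} {x y : Fin d → ℝ} (hx : Antitone x) (hy : Antitone y) (hxs : ∀ i, x i ∈ s)
    (hys : ∀ i, y i ∈ s) (hxy : ∀ k, psum x k ≤ psum y k) (hsum : ∑ i, x i = ∑ i, y i) :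
    ∑ i, φ (x i) ≤ ∑ i, φ (y i) := by
  have hslope : AntitoneOn (fun i => slope φ (x i) (y i)) {i | x i ≠ y i} :=
    fun i hi j hj hij => hφ.slope_le_slope (hxs j) (hys j) (hxs i) (hys i) hj hi (hx hij) (hy hij)
  obtain ⟨C, hC, hCeq⟩ := hslope.exists_antitone_extension (Set.toFinite _).bddBelow
    (Set.toFinite _).bddAbove
  have hchord : ∀ i, φ (y i) - φ (x i) = C i * (y i - x i) := by
    intro i
    by_cases hi : x i = y i
    · simp [hi]
    · rw [← hCeq hi, mul_comm]
      exact (sub_smul_slope φ (x i) (y i)).symm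
  have hΔ : ∀ k, 0 ≤ psum (fun i => y i - x i) k := fun k => by
    simpa only [psum, sum_sub_distrib, sub_nonneg] using hxy k
  have habel := sum_mul_nonneg_of_psum_nonneg_of_sum_eq_zero hC hΔ
    (by rw [sum_sub_distrib, hsum, sub_self])
  simpa only [← hchord, sum_sub_distrib, sub_nonneg] using habel

theorem StrictConvexOn.eq_of_majorized {s : Set ℝ} {φ : ℝ → ℝ} (hφ : StrictConvexOn ℝ s φ)
    {d : ℕ} {x y : Fin d → ℝ} (hx : Antitone x) (hy : Antitone y) (hxs : ∀ i, x i ∈ s)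
    (hys : ∀ i, y i ∈ s) (hxy : ∀ k, psum x k ≤ psum y k) (hsum : ∑ i, x i = ∑ i, y i)
    (hφxy : ∑ i, φ (x i) = ∑ i, φ (y i)) : x = y := by
  by_contra hne
  obtain ⟨i₀, hi₀⟩ := Function.ne_iff.1 hne
  set z : Fin d → ℝ := fun i => (1 / 2 : ℝ) • x i + (1 / 2 : ℝ) • y i
  have hpsum : ∀ k, psum z k = (psum x k + psum y k) / 2 := fun k => by
    simp only [z, psum, smul_eq_mul, sum_add_distrib, ← mul_sum]
    ring
  have hxz : ∑ i, φ (x i) ≤ ∑ i, φ (z i) := by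
    refine hφ.convexOn.sum_le_sum_of_majorized hx (fun i j hij => ?_) hxs
      (fun i => hφ.1 (hxs i) (hys i) (by norm_num) (by norm_num) (by norm_num)) (fun k => ?_) ?_
    · simp only [z, smul_eq_mul]
      linarith [hx hij, hy hij]
    · rw [hpsum]
      linarith [hxy k]
    · have := hpsum d
      simp only [psum_of_le _ le_rfl] at this
      rw [this, hsum]
      ring
  have hzxy : ∑ i, φ (z i) < ∑ i, ((1 / 2 : ℝ) • φ (x i) + (1 / 2 : ℝ) • φ (y i)) := by
    refine sum_lt_sum (fun i _ => ?_) ⟨i₀, mem_univ _, ?_⟩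
    · exact hφ.convexOn.2 (hxs i) (hys i) (by norm_num) (by norm_num) (by norm_num)
    · exact hφ.2 (hxs i₀) (hys i₀) hi₀ (by norm_num) (by norm_num) (by norm_num)
  simp only [smul_eq_mul, sum_add_distrib, ← mul_sum, hφxy] at hzxy
  linarith

lemma sum_mul_le_psum_of_antitone {d : ℕ} {ν t : Fin d → ℝ} (hν : Antitone ν)
    (hν0 : ∀ l, 0 ≤ ν l) (ht0 : ∀ l, 0 ≤ t l) (ht1 : ∀ l, t l ≤ 1) {k : ℕ}
    (hk : ∑ l, t l ≤ k) : ∑ l, ν l * t l ≤ psum ν k := by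
  -- compare with the weight `θ` of the `k`-th entry (zero if there is none)
  set θ : ℝ := if h : k < d then ν ⟨k, h⟩ else 0
  have hθ0 : 0 ≤ θ := by unfold θ; split_ifs <;> simp [hν0]
  have hpoint : ∀ l : Fin d,
      ν l * t l ≤ (if (l : ℕ) < k then ν l - θ else 0) + θ * t l := by
    intro l
    split_ifs with hl
    · have hθl : θ ≤ ν l := by
        unfold θ
        split_ifs with h
        · exact hν (Fin.mk_le_of_le_val hl.le)
        · exact hν0 l
      nlinarith [ht1 l]
    · have hlθ : ν l ≤ θ := by
        unfold θ
        rw [dif_pos (by omega)]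
        exact hν (Fin.le_def.2 (by simp; omega))
      nlinarith [ht0 l]
  have hcard : ∑ l, t l ≤ (univ.filter fun l : Fin d => (l : ℕ) < k).card := by
    rw [Fin.card_filter_val_lt, Nat.cast_min]
    refine le_min ?_ hk
    simpa using sum_le_sum fun l (_ : l ∈ univ) => ht1 l
  calc ∑ l, ν l * t l ≤ ∑ l : Fin d, ((if (l : ℕ) < k then ν l - θ else 0) + θ * t l) :=
        sum_le_sum fun l _ => hpoint l
    _ = psum ν k - θ * ((univ.filter fun l : Fin d => (l : ℕ) < k).card - ∑ l, t l) := by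
        rw [sum_add_distrib, ← sum_filter, sum_sub_distrib, psum, sum_const, nsmul_eq_mul,
          ← mul_sum]
        ring
    _ ≤ psum ν k := sub_le_self _ (mul_nonneg hθ0 (sub_nonneg.2 hcard))

lemma sum_mul_le_psum_decr {d : ℕ} {μ t : Fin d → ℝ} (hμ0 : ∀ l, 0 ≤ μ l)
    (ht0 : ∀ l, 0 ≤ t l) (ht1 : ∀ l, t l ≤ 1) {k : ℕ} (hk : ∑ l, t l ≤ k) :
    ∑ l, μ l * t l ≤ psum (decr μ) k := by
  set σ : Equiv.Perm (Fin d) := Fin.revPerm.trans (Tuple.sort μ)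
  rw [← Equiv.sum_comp σ, decr_eq_comp]
  exact sum_mul_le_psum_of_antitone (antitone_decr μ) (fun l => hμ0 _)
    (fun l => ht0 _) (fun l => ht1 _) (by rwa [Equiv.sum_comp σ t])

section InnerProductSpace

variable {𝕜 E : Type*} [RCLike 𝕜] [NormedAddCommGroup E] [InnerProductSpace 𝕜 E]

lemma re_inner_sum_smul_inner {ι : Type*} [Fintype ι] (w : ι → ℝ) (v : ι → E) (u : E) :
    RCLike.re ⟪u, ∑ i, ((w i : 𝕜) * ⟪v i, u⟫_𝕜) • v i⟫_𝕜 = ∑ i, w i * ‖⟪v i, u⟫_𝕜‖ ^ 2 := by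
  rw [inner_sum, map_sum]
  refine sum_congr rfl fun i _ => ?_
  rw [inner_smul_right, ← inner_conj_symm u (v i), mul_assoc, RCLike.mul_conj]
  norm_cast

lemma re_inner_map_self_eq_sum {ι : Type*} [Fintype ι] (T : E →ₗ[𝕜] E)
    (b : OrthonormalBasis ι 𝕜 E) (μ : ι → ℝ) (hb : ∀ l, T (b l) = (μ l : 𝕜) • b l) (u : E) :
    RCLike.re ⟪u, T u⟫_𝕜 = ∑ l, μ l * ‖⟪b l, u⟫_𝕜‖ ^ 2 := by
  have hTu : T u = ∑ l, ((μ l : 𝕜) * ⟪b l, u⟫_𝕜) • b l := by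
    conv_lhs => rw [← b.sum_repr' u]
    simp only [map_sum, map_smul, hb, smul_smul, mul_comm]
  rw [hTu, re_inner_sum_smul_inner]

/-- Ky Fan's maximum principle. -/
theorem sum_re_inner_map_le_psum_decr {d : ℕ} (T : E →ₗ[𝕜] E) (b : OrthonormalBasis (Fin d) 𝕜 E)
    (μ : Fin d → ℝ) (hμ0 : ∀ l, 0 ≤ μ l) (hb : ∀ l, T (b l) = (μ l : 𝕜) • b l) {r k : ℕ}
    {g : Fin r → E} (hg : Orthonormal 𝕜 g) (hrk : r ≤ k) :
    ∑ j, RCLike.re ⟪g j, T (g j)⟫_𝕜 ≤ psum (decr μ) k := by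
  have hweights : ∑ j, RCLike.re ⟪g j, T (g j)⟫_𝕜 = ∑ l, μ l * ∑ j, ‖⟪b l, g j⟫_𝕜‖ ^ 2 := by
    simp only [re_inner_map_self_eq_sum T b μ hb, mul_sum]
    exact sum_comm
  rw [hweights]
  refine sum_mul_le_psum_decr hμ0 (fun l => by positivity) (fun l => ?_) ?_
  · calc ∑ j, ‖⟪b l, g j⟫_𝕜‖ ^ 2 = ∑ j, ‖⟪g j, b l⟫_𝕜‖ ^ 2 := by simp only [norm_inner_symm]
      _ ≤ ‖b l‖ ^ 2 := hg.sum_inner_products_le _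
      _ = 1 := by simp
  · calc ∑ l, ∑ j, ‖⟪b l, g j⟫_𝕜‖ ^ 2 = ∑ j, ‖g j‖ ^ 2 := by
          rw [sum_comm]
          simp only [b.sum_sq_norm_inner_right]
      _ = r := by simp [hg.1]
      _ ≤ k := by exact_mod_cast hrk

lemma exists_orthonormal_sum_sq_norm_inner_eq {ι : Type*} (v : ι → E) (J : Finset ι) :
    ∃ (r : ℕ) (g : Fin r → E), Orthonormal 𝕜 g ∧ r ≤ J.card ∧
      ∀ i ∈ J, ∑ j, ‖⟪g j, v i⟫_𝕜‖ ^ 2 = ‖v i‖ ^ 2 := by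
  classical
  set V : Submodule 𝕜 E := Submodule.span 𝕜 (J.image v : Set E)
  set b := stdOrthonormalBasis 𝕜 V
  refine ⟨Module.finrank 𝕜 V, fun j => (b j : E), b.orthonormal.comp_linearIsometry V.subtypeₗᵢ,
    (finrank_span_finset_le_card _).trans card_image_le, fun i hi => ?_⟩
  have hv : v i ∈ V := Submodule.subset_span (mem_image_of_mem v hi)
  simpa only [Submodule.coe_inner, Submodule.coe_norm] using b.sum_sq_norm_inner_right ⟨v i, hv⟩

end InnerProductSpace

section Frame

open scoped ComplexOrder

variable {d n : ℕ} (f : Fin n → Fin d → ℂ)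

lemma frameOp_eq_mul_conjTranspose :
    frameOp f = Matrix.of (fun a i => f i a) * (Matrix.of fun a i => f i a).conjTranspose := by
  ext a b
  simp [frameOp, Matrix.sum_apply, Matrix.mul_apply]

lemma frameOp_posSemidef : (frameOp f).PosSemidef :=
  frameOp_eq_mul_conjTranspose f ▸ Matrix.posSemidef_self_mul_conjTranspose _

lemma trace_frameOp : (frameOp f).trace = ∑ i, (sqNorm (f i) : ℂ) := by
  simp only [Matrix.trace, Matrix.diag, frameOp, Matrix.sum_apply, Matrix.of_apply,
    Complex.mul_conj, sqNorm, Complex.ofReal_sum]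
  exact sum_comm

lemma sum_spec : ∑ j, spec f j = ∑ i, sqNorm (f i) := by
  have h := (frameOp_isHermitian f).trace_eq_sum_eigenvalues
  rw [trace_frameOp] at h
  rw [spec, sum_decr]
  exact Complex.ofReal_injective (by push_cast; exact h.symm)

lemma spec_antitone : Antitone (spec f) := antitone_decr _

lemma spec_nonneg (j : Fin d) : 0 ≤ spec f j := (frameOp_posSemidef f).eigenvalues_nonneg _

lemma toEuclideanLin_frameOp_eigenvectorBasis (l : Fin d) :
    Matrix.toEuclideanLin (frameOp f) ((frameOp_isHermitian f).eigenvectorBasis l) =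
      ((frameOp_isHermitian f).eigenvalues l : ℂ) • (frameOp_isHermitian f).eigenvectorBasis l := by
  ext a
  simpa [Matrix.toLpLin_apply, Complex.real_smul] using
    congrFun ((frameOp_isHermitian f).mulVec_eigenvectorBasis l) a

lemma re_inner_frameOp_self (u : EuclideanSpace ℂ (Fin d)) :
    RCLike.re ⟪u, Matrix.toEuclideanLin (frameOp f) u⟫_ℂ =
      ∑ i, ‖⟪WithLp.toLp 2 (f i), u⟫_ℂ‖ ^ 2 := by
  have hSu : Matrix.toEuclideanLin (frameOp f) u =
      ∑ i, ⟪WithLp.toLp 2 (f i), u⟫_ℂ • WithLp.toLp 2 (f i) := by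
    ext a
    simp [Matrix.toLpLin_apply, frameOp, Matrix.mulVec, dotProduct, PiLp.inner_apply, mul_sum,
      mul_comm, mul_left_comm]
  rw [hSu]
  simpa only [RCLike.ofReal_one, one_mul] using
    re_inner_sum_smul_inner (𝕜 := ℂ) (fun _ => 1) (fun i => WithLp.toLp 2 (f i)) u

theorem psum_le_psum_spec {α : Fin n → ℝ} (hf : ∀ i, sqNorm (f i) = α i) (k : ℕ) :
    psum α k ≤ psum (spec f) k := by
  set F : Fin n → EuclideanSpace ℂ (Fin d) := fun i => WithLp.toLp 2 (f i)
  have hα : ∀ i, α i = ‖F i‖ ^ 2 := fun i => by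
    simp [← hf i, sqNorm, F, EuclideanSpace.norm_sq_eq, Complex.sq_norm]
  obtain ⟨r, g, hg, hr, hparseval⟩ :=
    exists_orthonormal_sum_sq_norm_inner_eq (𝕜 := ℂ) F (univ.filter fun i : Fin n => (i : ℕ) < k)
  have hS := frameOp_isHermitian f
  calc psum α k = ∑ i ∈ univ.filter (fun i : Fin n => (i : ℕ) < k), ∑ j, ‖⟪g j, F i⟫_ℂ‖ ^ 2 :=
        sum_congr rfl fun i hi => by rw [hα, hparseval i hi]
    _ ≤ ∑ i, ∑ j, ‖⟪g j, F i⟫_ℂ‖ ^ 2 :=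
        sum_le_sum_of_subset_of_nonneg (filter_subset _ _) fun i _ _ => by positivity
    _ = ∑ j, RCLike.re ⟪g j, Matrix.toEuclideanLin (frameOp f) (g j)⟫_ℂ := by
        simp only [re_inner_frameOp_self, norm_inner_symm (g _)]
        exact sum_comm
    _ ≤ psum (spec f) k :=
        sum_re_inner_map_le_psum_decr _ hS.eigenvectorBasis hS.eigenvalues
          (frameOp_posSemidef f).eigenvalues_nonneg (toEuclideanLin_frameOp_eigenvectorBasis f) hg
          (hr.trans (by simp [Fin.card_filter_val_lt]))

end Frame

section WaterFilling

variable {n d : ℕ} (hd : d ≤ n) {α : Fin n → ℝ} {c : ℝ} {γ β : Fin d → ℝ}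

lemma psum_le_psum_of_le_level (hα : Antitone α) (hγ : ∀ i, γ i = max (α (Fin.castLE hd i)) c)
    (hαβ : ∀ k, psum α k ≤ psum β k) {k : ℕ} (hk : k ≤ d)
    (hβc : ∀ i : Fin d, (i : ℕ) < k → c ≤ β i) : psum γ k ≤ psum β k := by
  induction k with
  | zero => simp [psum]
  | succ k ih =>
    by_cases hαc : α (Fin.castLE hd ⟨k, hk⟩) ≤ c
    · rw [psum_succ γ hk, psum_succ β hk, hγ, max_eq_right hαc]
      exact add_le_add (ih (by omega) fun i hi => hβc i (by omega)) (hβc _ (by simp))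
    · -- `α` stays above the level `c` on the whole prefix, so `γ` agrees with `α` there
      calc psum γ (k + 1) = psum (fun i => α (Fin.castLE hd i)) (k + 1) := by
            refine psum_congr fun i hi => ?_
            rw [hγ, max_eq_left]
            exact (not_le.1 hαc).le.trans (hα (Fin.le_def.2 (by simp; omega)))
        _ = psum α (k + 1) := by rw [psum_comp_castLE, min_eq_left hk]
        _ ≤ psum β (k + 1) := hαβ (k + 1)

theorem psum_le_psum_of_waterFilling (hα : Antitone α)
    (hγ : ∀ i, γ i = max (α (Fin.castLE hd i)) c) (hβ : Antitone β)
    (hαβ : ∀ k, psum α k ≤ psum β k) (hsum : ∑ i, γ i = ∑ i, β i) (k : ℕ) :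
    psum γ k ≤ psum β k := by
  by_cases htail : ∀ i : Fin d, k ≤ (i : ℕ) → β i ≤ γ i
  · have : ∑ i ∈ univ.filter (fun i : Fin d => k ≤ (i : ℕ)), β i
        ≤ ∑ i ∈ univ.filter (fun i : Fin d => k ≤ (i : ℕ)), γ i :=
      sum_le_sum fun i hi => htail i (mem_filter.1 hi).2
    linarith [psum_add_sum_filter_le γ k, psum_add_sum_filter_le β k]
  · push Not at htail
    obtain ⟨i₀, hki₀, hi₀⟩ := htail
    refine psum_le_psum_of_le_level hd hα hγ hαβ (by omega) fun i hi => ?_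
    calc c ≤ γ i₀ := (hγ i₀).symm ▸ le_max_right _ _
      _ ≤ β i₀ := hi₀.le
      _ ≤ β i := hβ (Fin.le_def.2 (by omega))

end WaterFilling

/-- The water-filling spectrum is optimal: for any sequence with squared norms
α and any convex potential φ, the potential of the frame operator spectrum is
at least that of the water-filling; equality for a strictly convex φ forces
the spectrum to be the water-filling. -/
theorem stmt19 {n d : ℕ} (hd0 : 0 < d) (hd : d ≤ n)
    (α : Fin n → ℝ) (hα : Antitone α) (hα0 : ∀ i, 0 ≤ α i)
    (c : ℝ) (γop : Fin d → ℝ) (hwf : IsWaterFilling d hd0 hd α c γop)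
    (f : Fin n → Fin d → ℂ) (hf : ∀ i, sqNorm (f i) = α i) :
    (∀ φ : ℝ → ℝ, ConvexOn ℝ (Set.Ici 0) φ → (∀ x, 0 ≤ x → 0 ≤ φ x) →
        (∑ i, φ (γop i)) ≤ ∑ i, φ (spec f i)) ∧
    (∀ φ : ℝ → ℝ, StrictConvexOn ℝ (Set.Ici 0) φ → (∀ x, 0 ≤ x → 0 ≤ φ x) →
        (∑ i, φ (γop i)) = (∑ i, φ (spec f i)) → spec f = γop) := by
  obtain ⟨-, hγα, hγ⟩ := hwf
  have hγ_anti : Antitone γop := fun i j hij => by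
    simpa only [hγ] using max_le_max_right c (hα ((Fin.castLE_le_castLE_iff hd).2 hij))
  have hγ_nonneg : ∀ i, 0 ≤ γop i := fun i => (hγ i).symm ▸ (hα0 _).trans (le_max_left _ _)
  have hsum : ∑ i, γop i = ∑ i, spec f i := by
    simp only [hγ, hγα, sum_spec, hf]
  have hmaj : ∀ k, psum γop k ≤ psum (spec f) k :=
    psum_le_psum_of_waterFilling hd hα hγ (spec_antitone f) (psum_le_psum_spec f hf) hsum
  exact ⟨fun φ hφ _ => hφ.sum_le_sum_of_majorized hγ_anti (spec_antitone f) hγ_nonneg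
      (spec_nonneg f) hmaj hsum,
    fun φ hφ _ heq => (hφ.eq_of_majorized hγ_anti (spec_antitone f) hγ_nonneg (spec_nonneg f)
      hmaj hsum heq).symm⟩
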